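/- arXiv:1404.1417 — 3 statements merged into one kernel-verified Lean document; each statement's English description precedes it below -/
import Mathlib

section
/- For every surjection α : I → J of nonempty finite types, the map d_α is well defined (i.e., for t : I → ℝ with min_{i∈I} t_i = 0, one has min_{j∈J} v_j = 0 and, for every j ∈ J, min_{i∈I_j} u_{j,i} = 0) and d_α is a homeomorphism; its inverse sends ((v_j)_{j∈J}, (u_{j,i})_{j∈J, i∈I_j}) to the tuple t ∈ ℝ^I_0 given by t_i = u_{α(i),i} + v_{α(i)}. -/
/-!
Splitting `t` along the fibres of `α` into the fibrewise minima `v` and the fibrewise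
normalised remainders `u` loses nothing, since `t i = u_{α i, i} + v_{α i}`, and both directions
are built from coordinates, sums, differences and finite minima, hence continuous. The minimum of
`t` is the minimum of the fibrewise minima because every fibre is nonempty, and the remainders
have minimum `0` because subtracting a constant commutes with taking the minimum.
-/

open Function

section FiniteInfimum

variable {ι : Type*} [Finite ι] [Nonempty ι]

theorem ciInf_add_const (f : ι → ℝ) (c : ℝ) : ⨅ i, (f i + c) = (⨅ i, f i) + c := by
  simpa using ((OrderIso.addRight c).map_ciInf (Finite.bddBelow_range f)).symm

theorem ciInf_sub_ciInf_self (f : ι → ℝ) : ⨅ i, (f i - ⨅ i', f i') = 0 := by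
  simpa [sub_eq_add_neg] using ciInf_add_const f (-⨅ i', f i')

theorem continuous_ciInf_apply {X : Type*} [TopologicalSpace X] {f : ι → X → ℝ}
    (hf : ∀ i, Continuous (f i)) : Continuous fun x => ⨅ i, f i x := by
  have := Fintype.ofFinite ι
  simp only [← Finset.inf'_univ_eq_ciInf]
  exact Continuous.finset_inf'_apply _ fun i _ => hf i

end FiniteInfimum

theorem ciInf_eq_ciInf_ciInf_fiber {I J β : Type*} [ConditionallyCompleteLattice β] [Finite I]
    [Finite J] [Nonempty I] {α : I → J} (hα : Surjective α) (t : I → β) :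
    ⨅ i, t i = ⨅ j, ⨅ i : {i // α i = j}, t i.1 := by
  have : ∀ j, Nonempty {i // α i = j} := fun j => nonempty_subtype.mpr (hα j)
  have : Nonempty J := ⟨α (Classical.arbitrary I)⟩
  apply le_antisymm
  · exact le_ciInf fun j => le_ciInf fun i => ciInf_le (Finite.bddBelow_range t) i.1
  · exact le_ciInf fun i => (ciInf_le (Finite.bddBelow_range _) (α i)).trans
      (ciInf_le (Finite.bddBelow_range _) (⟨i, rfl⟩ : {i' // α i' = α i}))

/-- `ℝ^ι_0` -/
abbrev MinZeroTuple (ι : Type*) : Type _ := {t : ι → ℝ // ⨅ i, t i = 0}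

namespace MinZeroTuple

variable {I J : Type*} (α : I → J)

noncomputable def decompose (t : I → ℝ) : (J → ℝ) × ((j : J) → {i // α i = j} → ℝ) :=
  (fun j => ⨅ i : {i // α i = j}, t i.1, fun j i => t i.1 - ⨅ i' : {i' // α i' = j}, t i'.1)

def assemble (p : (J → ℝ) × ((j : J) → {i // α i = j} → ℝ)) : I → ℝ :=
  fun i => p.2 (α i) ⟨i, rfl⟩ + p.1 (α i)

variable {α}

theorem assemble_apply_fiber (p : (J → ℝ) × ((j : J) → {i // α i = j} → ℝ)) {j : J}
    (i : {i // α i = j}) : assemble α p i.1 = p.2 j i + p.1 j := by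
  obtain ⟨i, rfl⟩ := i
  rfl

theorem assemble_decompose (t : I → ℝ) : assemble α (decompose α t) = t :=
  funext fun _ => sub_add_cancel _ _

theorem decompose_assemble [Finite I] (hα : Surjective α)
    {p : (J → ℝ) × ((j : J) → {i // α i = j} → ℝ)} (hu : ∀ j, ⨅ i, p.2 j i = 0) :
    decompose α (assemble α p) = p := by
  have : ∀ j, Nonempty {i // α i = j} := fun j => nonempty_subtype.mpr (hα j)
  have hv : ∀ j, ⨅ i : {i // α i = j}, assemble α p i.1 = p.1 j := fun j => by
    simp only [assemble_apply_fiber]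
    rw [ciInf_add_const, hu, zero_add]
  refine Prod.ext (funext hv) (funext fun j => funext fun i => ?_)
  change assemble α p i.1 - _ = _
  rw [hv, assemble_apply_fiber, add_sub_cancel_right]

theorem ciInf_decompose_fst [Finite I] [Finite J] [Nonempty I] (hα : Surjective α) (t : I → ℝ) :
    ⨅ j, (decompose α t).1 j = ⨅ i, t i :=
  (ciInf_eq_ciInf_ciInf_fiber hα t).symm

theorem ciInf_decompose_snd [Finite I] (hα : Surjective α) (t : I → ℝ) (j : J) :
    ⨅ i, (decompose α t).2 j i = 0 :=
  have : Nonempty {i // α i = j} := nonempty_subtype.mpr (hα j)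
  ciInf_sub_ciInf_self _

theorem continuous_decompose [Finite I] (hα : Surjective α) : Continuous (decompose α) := by
  have : ∀ j, Nonempty {i // α i = j} := fun j => nonempty_subtype.mpr (hα j)
  have hinf : ∀ j, Continuous fun t : I → ℝ => ⨅ i : {i // α i = j}, t i.1 :=
    fun j => continuous_ciInf_apply fun i => continuous_apply i.1
  exact (continuous_pi hinf).prodMk
    (continuous_pi fun j => continuous_pi fun i => (continuous_apply i.1).sub (hinf j))

theorem continuous_assemble : Continuous (assemble α) := by
  unfold assemble
  fun_prop

variable [Finite I] [Finite J] [Nonempty I]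

/-- The cooperad structure map `d_α`. -/
noncomputable def decomposeHomeomorph (hα : Surjective α) :
    MinZeroTuple I ≃ₜ MinZeroTuple J × ((j : J) → MinZeroTuple {i // α i = j}) where
  toFun t := (⟨(decompose α t).1, (ciInf_decompose_fst hα t).trans t.2⟩,
    fun j => ⟨(decompose α t).2 j, ciInf_decompose_snd hα t j⟩)
  invFun p := ⟨assemble α (p.1.1, fun j => (p.2 j).1), by
    rw [← ciInf_decompose_fst hα, decompose_assemble hα fun j => (p.2 j).2]
    exact p.1.2⟩
  left_inv t := Subtype.ext (assemble_decompose t.1)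
  right_inv p := by
    have h := decompose_assemble hα (p := (p.1.1, fun j => (p.2 j).1)) fun j => (p.2 j).2
    exact Prod.ext (Subtype.ext (congrArg Prod.fst h))
      (funext fun j => Subtype.ext (congrFun (congrArg Prod.snd h) j))
  continuous_toFun := by
    have hd := (continuous_decompose hα).comp
      (continuous_subtype_val (p := fun t : I → ℝ => ⨅ i, t i = 0))
    exact (continuous_fst.comp hd).subtype_mk _ |>.prodMk <|
      continuous_pi fun j => ((continuous_apply j).comp (continuous_snd.comp hd)).subtype_mk _
  continuous_invFun := by
    refine (continuous_assemble.comp ?_).subtype_mk _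
    exact (continuous_subtype_val.comp continuous_fst).prodMk <|
      continuous_pi fun j => continuous_subtype_val.comp ((continuous_apply j).comp continuous_snd)

end MinZeroTuple

open MinZeroTuple in
theorem cooperad_structure_map_is_homeomorphism_general
    {I J : Type} [Fintype I] [Fintype J] [Nonempty I]
    (α : I → J) (hα : Function.Surjective α) :
    (∀ t : I → ℝ, (⨅ i, t i) = 0 →
      ((⨅ j : J, ⨅ i : {i : I // α i = j}, t i.1) = 0 ∧
        ∀ j : J, (⨅ i : {i : I // α i = j},
          (t i.1 - ⨅ i' : {i' : I // α i' = j}, t i'.1)) = 0)) ∧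
    ∃ e : {t : I → ℝ // (⨅ i, t i) = 0} ≃ₜ
        ({v : J → ℝ // (⨅ j, v j) = 0} ×
          ((j : J) → {u : {i : I // α i = j} → ℝ // (⨅ i, u i) = 0})),
      (∀ t : {t : I → ℝ // (⨅ i, t i) = 0},
        ((e t).1 : J → ℝ) = fun j => ⨅ i : {i : I // α i = j}, (t : I → ℝ) i.1) ∧
      (∀ (t : {t : I → ℝ // (⨅ i, t i) = 0}) (j : J),
        ((e t).2 j : {i : I // α i = j} → ℝ) =
          fun i => (t : I → ℝ) i.1 - ⨅ i' : {i' : I // α i' = j}, (t : I → ℝ) i'.1) ∧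
      (∀ p : {v : J → ℝ // (⨅ j, v j) = 0} ×
          ((j : J) → {u : {i : I // α i = j} → ℝ // (⨅ i, u i) = 0}),
        (e.symm p : I → ℝ) =
          fun i => (p.2 (α i) : {i' : I // α i' = α i} → ℝ) ⟨i, rfl⟩ + (p.1 : J → ℝ) (α i)) :=
  ⟨fun t ht => ⟨(ciInf_decompose_fst hα t).trans ht, ciInf_decompose_snd hα t⟩,
    decomposeHomeomorph hα, fun _ => rfl, fun _ _ => rfl, fun _ => rfl⟩

/-- For every surjection `α : I → J` of nonempty finite types, the cooperad structure map
`d_α` on `ℝ^I_0 = {t : I → ℝ | min_i t_i = 0}`, sending `t` to `((v_j)_j, ((u_{j,i})_i)_j)`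
with `v_j = min_{i ∈ α⁻¹ j} t_i` and `u_{j,i} = t_i - v_j`, is well defined and a
homeomorphism, with inverse `((v_j), (u_{j,i})) ↦ (u_{α i, i} + v_{α i})_i`. -/
theorem cooperad_structure_map_is_homeomorphism
    {I J : Type} [Fintype I] [Fintype J] [Nonempty I] [Nonempty J]
    (α : I → J) (hα : Function.Surjective α) :
    (∀ t : I → ℝ, (⨅ i, t i) = 0 →
      ((⨅ j : J, ⨅ i : {i : I // α i = j}, t i.1) = 0 ∧
        ∀ j : J, (⨅ i : {i : I // α i = j},
          (t i.1 - ⨅ i' : {i' : I // α i' = j}, t i'.1)) = 0)) ∧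
    ∃ e : {t : I → ℝ // (⨅ i, t i) = 0} ≃ₜ
        ({v : J → ℝ // (⨅ j, v j) = 0} ×
          ((j : J) → {u : {i : I // α i = j} → ℝ // (⨅ i, u i) = 0})),
      (∀ t : {t : I → ℝ // (⨅ i, t i) = 0},
        ((e t).1 : J → ℝ) = fun j => ⨅ i : {i : I // α i = j}, (t : I → ℝ) i.1) ∧
      (∀ (t : {t : I → ℝ // (⨅ i, t i) = 0}) (j : J),
        ((e t).2 j : {i : I // α i = j} → ℝ) =
          fun i => (t : I → ℝ) i.1 - ⨅ i' : {i' : I // α i' = j}, (t : I → ℝ) i'.1) ∧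
      (∀ p : {v : J → ℝ // (⨅ j, v j) = 0} ×
          ((j : J) → {u : {i : I // α i = j} → ℝ // (⨅ i, u i) = 0}),
        (e.symm p : I → ℝ) =
          fun i => (p.2 (α i) : {i' : I // α i' = α i} → ℝ) ⟨i, rfl⟩ + (p.1 : J → ℝ) (α i)) :=
  cooperad_structure_map_is_homeomorphism_general α hα
end

section
/- For every integer j with 1 ≤ j ≤ N, the maps r commute with the j-th coface: let δ^j : Δ^{N−1} → Δ^N be the map (t_0, …, t_{N−1}) ↦ (t_0, …, t_{j−1}, 0, t_j, …, t_{N−1}). Form the N-tuple of vector spaces W_0, …, W_{N−1} with W_m = V_m for m < j−1, W_{j−1} = V_{j−1} × V_j, and W_m = V_{m+1} for m ≥ j, with subsets U'_m ⊆ W_m given correspondingly (U'_{j−1} = U_{j−1} × U_j, which is again closed under nonnegative scalar multiplication), and let c : U'_0 × ⋯ × U'_{N−1} → U_0 × ⋯ × U_N be the canonical reassociation bijection. Then for all t ∈ Δ^{N−1} and u' ∈ U'_0 × ⋯ × U'_{N−1}: r^N(δ^j(t), c(u')) = (c × c)(r^{N−1}(t, u')), where r^{N−1} is formed for the tuple U'_0,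 …, U'_{N−1}. -/
universe u
/-- The map `r^n` of Definition 5.1 of Arone–Ching, for a tuple of real vector spaces:
its first tuple has `j`-th entry `(t_0 + ⋯ + t_j) • u_j` and its second tuple has `j`-th
entry `(t_{j+1} + ⋯ + t_{n-1}) • u_j` (so the last entry is `0`). -/
noncomputable def rmap {n : ℕ} (V : Fin n → ModuleCat.{u} ℝ)
    (t : Fin n → ℝ) (u : ∀ i, ↥(V i)) : (∀ i, ↥(V i)) × (∀ i, ↥(V i)) :=
  (fun k => (∑ m ∈ Finset.univ.filter (fun m => m ≤ k), t m) • u k,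
   fun k => (∑ m ∈ Finset.univ.filter (fun m => k < m), t m) • u k)

/-- The `j`-th coface map `δ^j : Δ^{N-1} → Δ^N`,
`(t_0, …, t_{N-1}) ↦ (t_0, …, t_{j-1}, 0, t_j, …, t_{N-1})`, written on coordinates. -/
def coface {N : ℕ} (j : ℕ) (hj : j ≤ N) (t : Fin N → ℝ) (i : Fin (N + 1)) : ℝ :=
  if h : i.val < j then t ⟨i.val, by omega⟩
  else if h' : i.val = j then 0
  else t ⟨i.val - 1, by have := i.isLt; omega⟩

/-- The `N`-tuple of vector spaces `W_0, …, W_{N-1}` obtained from `V_0, …, V_N` by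
replacing the pair `(V_{j-1}, V_j)` by the product `V_{j-1} × V_j`: `W_m = V_m` for
`m < j - 1`, `W_{j-1} = V_{j-1} × V_j`, and `W_m = V_{m+1}` for `m ≥ j`. -/
noncomputable def Wm {N : ℕ} (V : Fin (N + 1) → ModuleCat.{u} ℝ) (j : ℕ) (m : Fin N) :
    ModuleCat.{u} ℝ :=
  if m.val + 1 < j then V m.castSucc
  else if m.val + 1 = j then ModuleCat.of ℝ (↥(V m.castSucc) × ↥(V m.succ))
  else V m.succ

/-- The corresponding subsets `U'_m ⊆ W_m`, with `U'_{j-1} = U_{j-1} × U_j`. -/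
noncomputable def Uw {N : ℕ} (V : Fin (N + 1) → ModuleCat.{u} ℝ) (U : ∀ i, Set ↥(V i))
    (j : ℕ) (m : Fin N) : Set ↥(Wm V j m) := by
  unfold Wm
  split_ifs
  · exact U m.castSucc
  · exact (U m.castSucc).prod (U m.succ)
  · exact U m.succ

/-- The canonical reassociation bijection
`c : W_0 × ⋯ × W_{N-1} → V_0 × ⋯ × V_N`. -/
noncomputable def reassoc {N : ℕ} (V : Fin (N + 1) → ModuleCat.{u} ℝ) (j : ℕ)
    (hj1 : 1 ≤ j) (hjN : j ≤ N)
    (u' : ∀ m : Fin N, ↥(Wm V j m)) (i : Fin (N + 1)) : ↥(V i) := by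
  have hlt := i.isLt
  by_cases h1 : i.val + 1 < j
  · exact cast (congrArg (fun M : ModuleCat.{u} ℝ => ↥M)
      (show Wm V j ⟨i.val, by omega⟩ = V i from if_pos h1))
      (u' ⟨i.val, by omega⟩)
  · by_cases h2 : i.val + 1 = j
    · exact (cast (congrArg (fun M : ModuleCat.{u} ℝ => ↥M)
        (show Wm V j ⟨i.val, by omega⟩ =
            ModuleCat.of ℝ (↥(V i) × ↥(V (Fin.succ ⟨i.val, by omega⟩))) from
          (if_neg h1).trans (if_pos h2)))
        (u' ⟨i.val, by omega⟩)).1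
    · by_cases h3 : i.val = j
      · have hb : i.val - 1 < N := by omega
        have hms : (⟨i.val - 1, hb⟩ : Fin N).succ = i :=
          Fin.ext (show (i.val - 1) + 1 = i.val by omega)
        exact (cast (congrArg (fun M : ModuleCat.{u} ℝ => ↥M)
          (show Wm V j ⟨i.val - 1, hb⟩ =
              ModuleCat.of ℝ (↥(V (Fin.castSucc ⟨i.val - 1, hb⟩)) × ↥(V i)) from
            ((if_neg (show ¬(i.val - 1 + 1 < j) by omega)).trans
              (if_pos (show i.val - 1 + 1 = j by omega))).trans
              (congrArg (fun M : ModuleCat.{u} ℝ =>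
                  ModuleCat.of ℝ (↥(V (Fin.castSucc ⟨i.val - 1, hb⟩)) × ↥M))
                (congrArg V hms))))
          (u' ⟨i.val - 1, hb⟩)).2
      · have hb : i.val - 1 < N := by omega
        have hms : (⟨i.val - 1, hb⟩ : Fin N).succ = i :=
          Fin.ext (show (i.val - 1) + 1 = i.val by omega)
        exact cast (congrArg (fun M : ModuleCat.{u} ℝ => ↥M)
          (show Wm V j ⟨i.val - 1, hb⟩ = V i from
            ((if_neg (show ¬(i.val - 1 + 1 < j) by omega)).trans
              (if_neg (show ¬(i.val - 1 + 1 = j) by omega))).trans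
              (congrArg V hms)))
          (u' ⟨i.val - 1, hb⟩)

/-! The coface `δ^j` inserts a zero at position `j = p.succ`, where `p = j - 1` is the index of
the merged factor `W_p = V_{j-1} × V_j`; the factor of `c(u')` at position `i` is taken from
`u'_{p.predAbove i}`. Deleting the inserted zero turns the partial sums of `δ^j t` up to `i`
(resp. beyond `i`) into the partial sums of `t` up to (resp. beyond) `p.predAbove i`, so both
tuples of `r^N(δ^j t, c u')` are `c` applied to the corresponding tuples of `r^{N-1}(t, u')`. -/

theorem Fin.succAbove_succ_le_iff_le_predAbove {n : ℕ} (p i : Fin n) (k : Fin (n + 1)) :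
    p.succ.succAbove i ≤ k ↔ i ≤ p.predAbove k := by
  simp only [Fin.succAbove, Fin.predAbove]
  split_ifs with hi hk hk <;>
    simp only [Fin.lt_def, Fin.le_def, Fin.val_castSucc, Fin.val_succ, Fin.val_pred,
      Fin.coe_castPred] at hi hk ⊢ <;> omega

theorem Fin.val_predAbove {n : ℕ} (p : Fin n) (i : Fin (n + 1)) :
    (p.predAbove i : ℕ) = if (i : ℕ) ≤ p then (i : ℕ) else (i : ℕ) - 1 := by
  simp only [Fin.predAbove, Fin.lt_def, Fin.val_castSucc]
  split_ifs <;> simp only [Fin.val_pred, Fin.coe_castPred] <;> omega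

theorem Fin.sum_filter_le_insertNth_zero {M : Type*} [AddCommMonoid M] {n : ℕ} (p : Fin n)
    (t : Fin n → M) (k : Fin (n + 1)) :
    ∑ m ∈ Finset.univ.filter (fun m => m ≤ k), Fin.insertNth p.succ 0 t m
      = ∑ m ∈ Finset.univ.filter (fun m => m ≤ p.predAbove k), t m := by
  rw [Finset.sum_filter, Finset.sum_filter, Fin.sum_univ_succAbove _ p.succ]
  simp only [Fin.insertNth_apply_same, Fin.insertNth_apply_succAbove, ite_self, zero_add,
    Fin.succAbove_succ_le_iff_le_predAbove]

theorem Fin.sum_filter_lt_insertNth_zero {M : Type*} [AddCommMonoid M] {n : ℕ} (p : Fin n)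
    (t : Fin n → M) (k : Fin (n + 1)) :
    ∑ m ∈ Finset.univ.filter (fun m => k < m), Fin.insertNth p.succ 0 t m
      = ∑ m ∈ Finset.univ.filter (fun m => p.predAbove k < m), t m := by
  rw [Finset.sum_filter, Finset.sum_filter, Fin.sum_univ_succAbove _ p.succ]
  simp only [Fin.insertNth_apply_same, Fin.insertNth_apply_succAbove, ite_self, zero_add,
    ← not_le, Fin.succAbove_succ_le_iff_le_predAbove]

theorem coface_eq_insertNth {N : ℕ} (j : ℕ) (hj : j ≤ N) (t : Fin N → ℝ) :
    coface j hj t = Fin.insertNth ⟨j, Nat.lt_succ_of_le hj⟩ 0 t := by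
  funext i
  unfold coface
  split_ifs with hlt heq
  · rw [Fin.insertNth_apply_below (Fin.lt_def.2 hlt), eq_rec_constant]; rfl
  · rw [show i = ⟨j, Nat.lt_succ_of_le hj⟩ from Fin.ext heq, Fin.insertNth_apply_same]
  · rw [Fin.insertNth_apply_above (Fin.lt_def.2 (show j < (i : ℕ) by omega)), eq_rec_constant]
    rfl

theorem ModuleCat.cast_smul {R : Type*} [Ring R] {M M' : ModuleCat.{u} R} (h : M = M')
    (e : (M : Type u) = M') (c : R) (x : M) : cast e (c • x) = c • cast e x := by
  subst h; rfl

theorem ModuleCat.smul_mem_mpr {R : Type*} [Ring R] [LE R] {M M' : ModuleCat.{u} R}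
    (h : M = M') (e : Set M = Set M') {s : Set M'}
    (hs : ∀ c : R, 0 ≤ c → ∀ v ∈ s, c • v ∈ s) :
    ∀ c : R, 0 ≤ c → ∀ w ∈ e.mpr s, c • w ∈ e.mpr s := by
  subst h; exact hs

theorem smul_mem_Uw {N : ℕ} (V : Fin (N + 1) → ModuleCat.{u} ℝ) (U : ∀ i, Set ↥(V i))
    (j : ℕ) (hU : ∀ k, ∀ c : ℝ, 0 ≤ c → ∀ v ∈ U k, c • v ∈ U k) (m : Fin N) :
    ∀ c : ℝ, 0 ≤ c → ∀ w ∈ Uw V U j m, c • w ∈ Uw V U j m := by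
  unfold Uw
  split_ifs with h1
  · exact ModuleCat.smul_mem_mpr (if_pos h1) _ (hU _)
  refine ModuleCat.smul_mem_mpr (if_neg h1) _ ?_
  split_ifs with h2
  · refine ModuleCat.smul_mem_mpr (if_pos h2) _ ?_
    exact fun c hc w hw => ⟨hU _ c hc _ hw.1, hU _ c hc _ hw.2⟩
  · exact ModuleCat.smul_mem_mpr (if_neg h2) _ (hU _)

theorem reassoc_smul {N : ℕ} (V : Fin (N + 1) → ModuleCat.{u} ℝ) (j : ℕ)
    (hj1 : 1 ≤ j) (hjN : j ≤ N) (c : Fin N → ℝ) (u' : ∀ m : Fin N, ↥(Wm V j m))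
    (i : Fin (N + 1)) :
    reassoc V j hj1 hjN (fun m => c m • u' m) i
      = c ((⟨j - 1, by omega⟩ : Fin N).predAbove i) • reassoc V j hj1 hjN u' i := by
  have hc : ∀ (k : ℕ) (hk : k < N),
      k = (if (i : ℕ) ≤ j - 1 then (i : ℕ) else (i : ℕ) - 1) →
        c ⟨k, hk⟩ = c ((⟨j - 1, by omega⟩ : Fin N).predAbove i) :=
    fun k hk h => congrArg c (Fin.ext (by rw [Fin.val_predAbove]; exact h))
  have hsucc : ∀ h, (i : ℕ) ≠ 0 → (⟨(i : ℕ) - 1, h⟩ : Fin N).succ = i :=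
    fun h hi => Fin.ext (by simp only [Fin.val_succ]; omega)
  unfold reassoc
  -- each rewrite leaves the identification of `W_m` with the target space as a side goal
  split_ifs with h1 h2 h3 <;> dsimp only <;> rw [ModuleCat.cast_smul ?_]
  · rw [hc _ _ (by split_ifs <;> omega)]
  · unfold Wm; rw [if_pos h1]; rfl
  · rw [Prod.smul_fst, hc _ _ (by split_ifs <;> omega)]
  · unfold Wm; rw [if_neg h1, if_pos h2]; rfl
  · rw [Prod.smul_snd, hc _ _ (by split_ifs <;> omega)]
  · unfold Wm
    rw [if_neg (by dsimp only; omega), if_pos (by dsimp only; omega), hsucc _ (by omega)]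
  · rw [hc _ _ (by split_ifs <;> omega)]
  · unfold Wm
    rw [if_neg (by dsimp only; omega), if_neg (by dsimp only; omega), hsucc _ (by omega)]

theorem r_commutes_with_jth_coface_general {N : ℕ} (j : ℕ) (hj1 : 1 ≤ j) (hjN : j ≤ N)
    (V : Fin (N + 1) → ModuleCat.{u} ℝ)
    (U : ∀ k, Set ↥(V k))
    (hU : ∀ k, ∀ c : ℝ, 0 ≤ c → ∀ v ∈ U k, c • v ∈ U k)
    (t : Fin N → ℝ)
    (u' : ∀ m : Fin N, ↥(Wm V j m)) :
    (∀ m : Fin N, ∀ c : ℝ, 0 ≤ c → ∀ w ∈ Uw V U j m, c • w ∈ Uw V U j m) ∧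
    rmap V (coface j hjN t) (reassoc V j hj1 hjN u') =
      (reassoc V j hj1 hjN ((rmap (Wm V j) t u').1),
       reassoc V j hj1 hjN ((rmap (Wm V j) t u').2)) := by
  refine ⟨smul_mem_Uw V U j hU, ?_⟩
  have hj : (⟨j, Nat.lt_succ_of_le hjN⟩ : Fin (N + 1)) = (⟨j - 1, by omega⟩ : Fin N).succ :=
    Fin.ext (by simp only [Fin.val_succ]; omega)
  rw [coface_eq_insertNth, hj]
  refine Prod.ext (funext fun i => ?_) (funext fun i => ?_) <;> dsimp only [rmap] <;>
    rw [reassoc_smul]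
  · rw [Fin.sum_filter_le_insertNth_zero]
  · rw [Fin.sum_filter_lt_insertNth_zero]

/-- For `1 ≤ j ≤ N`, the maps `r` commute with the `j`-th coface: the subsets
`U'_m ⊆ W_m` are again closed under nonnegative scalar multiplication, and
`r^N(δ^j(t), c(u')) = (c × c)(r^{N-1}(t, u'))` for every `t ∈ Δ^{N-1}` and every `u'`
with `u'_m ∈ U'_m`. -/
theorem r_commutes_with_jth_coface {N : ℕ} (j : ℕ) (hj1 : 1 ≤ j) (hjN : j ≤ N)
    (V : Fin (N + 1) → ModuleCat.{u} ℝ)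
    [∀ k, TopologicalSpace ↥(V k)] [∀ k, IsTopologicalAddGroup ↥(V k)]
    [∀ k, ContinuousSMul ℝ ↥(V k)] [∀ k, FiniteDimensional ℝ ↥(V k)]
    (U : ∀ k, Set ↥(V k))
    (hU : ∀ k, ∀ c : ℝ, 0 ≤ c → ∀ v ∈ U k, c • v ∈ U k)
    (t : Fin N → ℝ) (ht : t ∈ stdSimplex ℝ (Fin N))
    (u' : ∀ m : Fin N, ↥(Wm V j m)) (hu' : ∀ m, u' m ∈ Uw V U j m) :
    (∀ m : Fin N, ∀ c : ℝ, 0 ≤ c → ∀ w ∈ Uw V U j m, c • w ∈ Uw V U j m) ∧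
    rmap V (coface j hjN t) (reassoc V j hj1 hjN u') =
      (reassoc V j hj1 hjN ((rmap (Wm V j) t u').1),
       reassoc V j hj1 hjN ((rmap (Wm V j) t u').2)) :=
  r_commutes_with_jth_coface_general j hj1 hjN V U hU t u'
end

section
/- Let C and D be categories and let F ⊣ U ⊣ R be an adjoint triple, with U : C ⥤ D and F, R : D ⥤ C, so there are adjunctions F ⊣ U and U ⊣ R. Then the Eilenberg–Moore category of algebras over the monad on D whose underlying endofunctor is F ⋙ U (the monad induced by the adjunction F ⊣ U) is equivalent to the Eilenberg–Moore category of coalgebras over the comonad on D whose underlying endofunctor is R ⋙ U (the comonad induced by the adjunction U ⊣ R). -/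
/-!
The composite adjunction `F ⋙ U ⊣ R ⋙ U` exhibits the monad `F ⋙ U` as left adjoint to the
comonad `R ⋙ U`, and the counit and comultiplication of the comonad are the conjugates of the
unit and multiplication of the monad. Transposing the structure map of an algebra along this
adjunction therefore turns the unit and associativity laws of an algebra into the counit and
coassociativity laws of a coalgebra, and conversely; morphisms are unchanged.
-/

open CategoryTheory

namespace CategoryTheory.Adjunction

section Endofunctors

variable {D : Type*} [Category D] {L R : D ⥤ D} (adj : L ⊣ R)

lemma homEquiv_comp_map_eq_iff {X Y : D} (a : L.obj X ⟶ X) (b : L.obj Y ⟶ Y) (f : X ⟶ Y) :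
    adj.homEquiv X X a ≫ R.map f = f ≫ adj.homEquiv Y Y b ↔ L.map f ≫ b = a ≫ f := by
  rw [← homEquiv_naturality_right, ← homEquiv_naturality_left,
    (adj.homEquiv _ _).injective.eq_iff, eq_comm]

lemma homEquiv_homEquiv_map_comp {X Y Z : D} (f : L.obj X ⟶ Y) (g : L.obj Y ⟶ Z) :
    adj.homEquiv X (R.obj Z) (adj.homEquiv (L.obj X) Z (L.map f ≫ g)) =
      adj.homEquiv X Y f ≫ R.map (adj.homEquiv Y Z g) := by
  rw [homEquiv_naturality_left, homEquiv_naturality_right]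

end Endofunctors

variable {D : Type*} [Category D] {T : Monad D} {G : Comonad D}

/-- `G.ε` and `G.δ` are the conjugates of `T.η` and `T.μ` under `adj`. -/
structure IsConjugate (adj : T.toFunctor ⊣ G.toFunctor) : Prop where
  homEquiv_comp_ε {X Y : D} (f : T.obj X ⟶ Y) :
    adj.homEquiv X Y f ≫ G.ε.app Y = T.η.app X ≫ f
  homEquiv_comp_δ {X Y : D} (f : T.obj X ⟶ Y) :
    adj.homEquiv X Y f ≫ G.δ.app Y =
      adj.homEquiv X (G.obj Y) (adj.homEquiv (T.obj X) Y (T.μ.app X ≫ f))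

namespace IsConjugate

variable {adj : T.toFunctor ⊣ G.toFunctor} (h : adj.IsConjugate)
include h

lemma η_comp_eq_id_iff {X : D} (a : T.obj X ⟶ X) :
    T.η.app X ≫ a = 𝟙 X ↔ adj.homEquiv X X a ≫ G.ε.app X = 𝟙 X := by
  rw [h.homEquiv_comp_ε]

lemma μ_comp_eq_map_comp_iff {X : D} (a : T.obj X ⟶ X) :
    T.μ.app X ≫ a = T.map a ≫ a ↔
      adj.homEquiv X X a ≫ G.δ.app X = adj.homEquiv X X a ≫ G.map (adj.homEquiv X X a) := by
  rw [h.homEquiv_comp_δ, ← homEquiv_homEquiv_map_comp, (adj.homEquiv _ _).injective.eq_iff,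
    (adj.homEquiv _ _).injective.eq_iff]

def algebraToCoalgebra : T.Algebra ⥤ G.Coalgebra where
  obj A :=
    { A := A.A
      a := adj.homEquiv A.A A.A A.a
      counit := (h.η_comp_eq_id_iff A.a).1 A.unit
      coassoc := (h.μ_comp_eq_map_comp_iff A.a).1 A.assoc }
  map f :=
    { f := f.f
      h := (homEquiv_comp_map_eq_iff adj _ _ f.f).2 f.h }

def coalgebraToAlgebra : G.Coalgebra ⥤ T.Algebra where
  obj A :=
    { A := A.A
      a := (adj.homEquiv A.A A.A).symm A.a
      unit := (h.η_comp_eq_id_iff _).2 (by simpa only [Equiv.apply_symm_apply] using A.counit)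
      assoc := (h.μ_comp_eq_map_comp_iff _).2
        (by simpa only [Equiv.apply_symm_apply] using A.coassoc) }
  map f :=
    { f := f.f
      h := (homEquiv_comp_map_eq_iff adj _ _ f.f).1
        (by simpa only [Equiv.apply_symm_apply] using f.h) }

def algebraCoalgebraEquiv : T.Algebra ≌ G.Coalgebra :=
  Equivalence.mk h.algebraToCoalgebra h.coalgebraToAlgebra
    (NatIso.ofComponents
      (fun A => Monad.Algebra.isoMk (Iso.refl A.A)
        (by simp [algebraToCoalgebra, coalgebraToAlgebra]))
      (fun f => by ext; exact (Category.comp_id f.f).trans (Category.id_comp f.f).symm))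
    (NatIso.ofComponents
      (fun A => Comonad.Coalgebra.isoMk (Iso.refl A.A)
        (by simp [algebraToCoalgebra, coalgebraToAlgebra]))
      (fun f => by ext; exact (Category.comp_id f.f).trans (Category.id_comp f.f).symm))

end IsConjugate

section AdjointTriple

variable {C : Type*} [Category C] {F : D ⥤ C} {U : C ⥤ D} {R : D ⥤ C}
  (adj₁ : F ⊣ U) (adj₂ : U ⊣ R)

lemma comp_homEquiv_comp_counit {X Y : D} (f : U.obj (F.obj X) ⟶ Y) :
    (adj₁.comp adj₂).homEquiv X Y f ≫ adj₂.counit.app Y = adj₁.unit.app X ≫ f := by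
  simp [comp_homEquiv, homEquiv_unit]

lemma comp_homEquiv_comp_map_unit {X Y : D} (f : U.obj (F.obj X) ⟶ Y) :
    (adj₁.comp adj₂).homEquiv X Y f ≫ U.map (adj₂.unit.app (R.obj Y)) =
      (adj₁.comp adj₂).homEquiv X _
        ((adj₁.comp adj₂).homEquiv _ Y (U.map (adj₁.counit.app (F.obj X)) ≫ f)) := by
  simp [comp_homEquiv, homEquiv_unit]

lemma isConjugate_comp :
    IsConjugate (T := adj₁.toMonad) (G := adj₂.toComonad) (adj₁.comp adj₂) where
  homEquiv_comp_ε := comp_homEquiv_comp_counit adj₁ adj₂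
  homEquiv_comp_δ := comp_homEquiv_comp_map_unit adj₁ adj₂

end AdjointTriple

end CategoryTheory.Adjunction

/-- For an adjoint triple `F ⊣ U ⊣ R` (with `U : C ⥤ D` and `F, R : D ⥤ C`), the
Eilenberg–Moore category of algebras over the monad `F ⋙ U` on `D` induced by the
adjunction `F ⊣ U` is equivalent to the Eilenberg–Moore category of coalgebras over the
comonad `R ⋙ U` on `D` induced by the adjunction `U ⊣ R`. -/
theorem algebras_equivalent_to_coalgebras_of_adjoint_triple
    {C : Type*} {D : Type*} [Category C] [Category D]
    (F : D ⥤ C) (U : C ⥤ D) (R : D ⥤ C)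
    (adj₁ : F ⊣ U) (adj₂ : U ⊣ R) :
    Nonempty (adj₁.toMonad.Algebra ≌ adj₂.toComonad.Coalgebra) :=
  ⟨(Adjunction.isConjugate_comp adj₁ adj₂).algebraCoalgebraEquiv⟩
end
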